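/- If the multilinear extension F̃ satisfies sup_{ψ ∈ [0,1]^V} |F̃(ψ)| < 1/|V|, then the matrix A = I − Σ'(∇F̃(ψ)) · ∇²F̃(ψ) is invertible for every ψ ∈ [0,1]^V, since the Frobenius norm (hence operator norm) of Σ'(∇F̃(ψ)) · ∇²F̃(ψ) is strictly less than 1. -/

import Mathlib

open Real Finset

noncomputable def mlext {n : ℕ} (F : Finset (Fin n) → ℝ) (ψ : Fin n → ℝ) : ℝ :=
  ∑ S : Finset (Fin n), F S * ((∏ j ∈ S, ψ j) * ∏ j ∈ Sᶜ, (1 - ψ j))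

noncomputable def pd {n : ℕ} (i : Fin n) (f : (Fin n → ℝ) → ℝ) (ψ : Fin n → ℝ) : ℝ :=
  deriv (fun t => f (Function.update ψ i t)) (ψ i)

noncomputable def sigmoid (x : ℝ) : ℝ := (1 + Real.exp (-x))⁻¹

/-! The multilinear extension is affine in each coordinate. Hence its first partials are
differences of values at opposite faces of the cube, its pure second partials vanish, and a mixed
second partial is a second difference of four values on the cube, so it is bounded by `4 c`, where
`c` is the supremum of `|mlext F|` on the cube. As `σ' ≤ 1/4`, every entry of `Σ' ∇²F̃` is at
most `c` in absolute value, so every row sum is at most `n c < 1`: the matrix has `ℓ^∞` operator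
norm `< 1`, and `1 - M` is inverted by the Neumann series. -/

open Function

namespace Matrix
open scoped Matrix.Norms.Operator

theorem isUnit_one_sub_of_forall_sum_norm_lt_one {ι 𝕜 : Type*} [Fintype ι] [DecidableEq ι]
    [RCLike 𝕜] (M : Matrix ι ι 𝕜) (h : ∀ i, ∑ j, ‖M i j‖ < 1) :
    IsUnit (1 - M) := by
  refine isUnit_one_sub_of_norm_lt_one ?_
  rw [linfty_opNorm_def, ← NNReal.coe_one, NNReal.coe_lt_coe, Finset.sup_lt_iff zero_lt_one]
  intro i _
  rw [← NNReal.coe_lt_coe]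
  simpa using h i

end Matrix

variable {n : ℕ}

lemma pd_eq_of_update_eq_affine {f : (Fin n → ℝ) → ℝ} {i : Fin n} {ψ : Fin n → ℝ} {a b : ℝ}
    (h : ∀ t, f (update ψ i t) = a + t * b) : pd i f ψ = b := by
  have : HasDerivAt (fun t => f (update ψ i t)) b (ψ i) := by
    simp_rw [h]
    simpa using ((hasDerivAt_id (ψ i)).mul_const b).const_add a
  exact this.deriv

lemma mlext_update (F : Finset (Fin n) → ℝ) (ψ : Fin n → ℝ) (i : Fin n) (t : ℝ) :
    mlext F (update ψ i t) = mlext F (update ψ i 0) +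
      t * (mlext F (update ψ i 1) - mlext F (update ψ i 0)) := by
  have hcompl : ∀ s, (fun j => 1 - update ψ i s j) = update (fun j => 1 - ψ j) i (1 - s) :=
    fun s => funext (apply_update (fun _ x => 1 - x) ψ i s)
  simp only [mlext, hcompl, mul_sum, ← sum_sub_distrib, ← sum_add_distrib]
  refine sum_congr rfl fun S _ => ?_
  by_cases hi : i ∈ S
  · simp only [prod_update_of_mem hi, prod_update_of_notMem (notMem_compl.2 hi)]
    ring
  · simp only [prod_update_of_notMem hi, prod_update_of_mem (mem_compl.2 hi)]
    ring

lemma pd_mlext (F : Finset (Fin n) → ℝ) (i : Fin n) (ψ : Fin n → ℝ) :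
    pd i (mlext F) ψ = mlext F (update ψ i 1) - mlext F (update ψ i 0) :=
  pd_eq_of_update_eq_affine (mlext_update F ψ i)

lemma pd_pd_mlext_self (F : Finset (Fin n) → ℝ) (i : Fin n) (ψ : Fin n → ℝ) :
    pd i (fun φ => pd i (mlext F) φ) ψ = 0 := by
  refine pd_eq_of_update_eq_affine (a := pd i (mlext F) ψ) fun t => ?_
  simp only [pd_mlext, update_idem]
  ring

lemma pd_pd_mlext_of_ne (F : Finset (Fin n) → ℝ) {i j : Fin n} (hij : i ≠ j) (ψ : Fin n → ℝ) :
    pd j (fun φ => pd i (mlext F) φ) ψ =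
      mlext F (update (update ψ i 1) j 1) - mlext F (update (update ψ i 1) j 0)
        - (mlext F (update (update ψ i 0) j 1) - mlext F (update (update ψ i 0) j 0)) := by
  refine pd_eq_of_update_eq_affine
    (a := mlext F (update (update ψ i 1) j 0) - mlext F (update (update ψ i 0) j 0)) fun t => ?_
  rw [pd_mlext, update_comm hij.symm, update_comm hij.symm, mlext_update F _ j t,
    mlext_update F (update ψ i 0) j t]
  ring

lemma abs_mlext_le (F : Finset (Fin n) → ℝ) {φ : Fin n → ℝ} (hφ : ∀ k, φ k ∈ Set.Icc (0:ℝ) 1) :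
    |mlext F φ| ≤ ∑ S, |F S| := by
  refine (abs_sum_le_sum_abs _ _).trans (sum_le_sum fun S _ => ?_)
  have hprod : ∀ (T : Finset (Fin n)) (g : Fin n → ℝ), (∀ k, g k ∈ Set.Icc (0:ℝ) 1) →
      ∏ k ∈ T, g k ∈ Set.Icc (0:ℝ) 1 := fun T g hg =>
    ⟨prod_nonneg fun k _ => (hg k).1, prod_le_one (fun k _ => (hg k).1) fun k _ => (hg k).2⟩
  obtain ⟨hP0, hP1⟩ := hprod S φ hφ
  obtain ⟨hQ0, hQ1⟩ := hprod Sᶜ (fun k => 1 - φ k) fun k =>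
    ⟨by linarith [(hφ k).2], by linarith [(hφ k).1]⟩
  rw [abs_mul, abs_of_nonneg (mul_nonneg hP0 hQ0)]
  exact mul_le_of_le_one_right (abs_nonneg _) (mul_le_one₀ hP1 hQ0 hQ1)

lemma abs_pd_pd_mlext_le (F : Finset (Fin n) → ℝ) {c : ℝ}
    (hc : ∀ φ : Fin n → ℝ, (∀ k, φ k ∈ Set.Icc (0:ℝ) 1) → |mlext F φ| ≤ c)
    {ψ : Fin n → ℝ} (hψ : ∀ k, ψ k ∈ Set.Icc (0:ℝ) 1) (i j : Fin n) :
    |pd j (fun φ => pd i (mlext F) φ) ψ| ≤ 4 * c := by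
  obtain rfl | hij := eq_or_ne i j
  · rw [pd_pd_mlext_self, abs_zero]
    linarith [abs_nonneg (mlext F ψ), hc ψ hψ]
  have hupdate : ∀ {φ : Fin n → ℝ} {l : Fin n} {t : ℝ}, (∀ k, φ k ∈ Set.Icc (0:ℝ) 1) →
      t ∈ Set.Icc (0:ℝ) 1 → ∀ k, update φ l t k ∈ Set.Icc (0:ℝ) 1 := fun hφ ht =>
    (forall_update_iff _ _).2 ⟨ht, fun k _ => hφ k⟩
  have hvertex : ∀ s t : ℝ, s ∈ Set.Icc (0:ℝ) 1 → t ∈ Set.Icc (0:ℝ) 1 →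
      |mlext F (update (update ψ i s) j t)| ≤ c := fun s t hs ht =>
    hc _ (hupdate (hupdate hψ hs) ht)
  rw [pd_pd_mlext_of_ne F hij]
  have h0 : (0:ℝ) ∈ Set.Icc (0:ℝ) 1 := ⟨le_rfl, zero_le_one⟩
  have h1 : (1:ℝ) ∈ Set.Icc (0:ℝ) 1 := ⟨zero_le_one, le_rfl⟩
  have e11 := abs_le.1 (hvertex 1 1 h1 h1)
  have e10 := abs_le.1 (hvertex 1 0 h1 h0)
  have e01 := abs_le.1 (hvertex 0 1 h0 h1)
  have e00 := abs_le.1 (hvertex 0 0 h0 h0)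
  rw [abs_le]
  constructor <;> linarith

lemma mul_inv_one_add_sq_le (y : ℝ) : y * ((1 + y) ^ 2)⁻¹ ≤ 1 / 4 := by
  rcases le_or_gt y 0 with hy | hy
  · exact (mul_nonpos_of_nonpos_of_nonneg hy (by positivity)).trans (by norm_num)
  · rw [← div_eq_mul_inv, div_le_iff₀ (by positivity)]
    nlinarith [sq_nonneg (1 - y)]

theorem implicit_matrix_invertible_general {n : ℕ} (F : Finset (Fin n) → ℝ)
    (hsup : sSup ((fun φ => |mlext F φ|) '' {φ : Fin n → ℝ | ∀ k, φ k ∈ Set.Icc (0:ℝ) 1})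
      < 1 / n) :
    ∀ ψ : Fin n → ℝ, (∀ k, ψ k ∈ Set.Icc (0:ℝ) 1) →
      IsUnit ((1 : Matrix (Fin n) (Fin n) ℝ) -
        Matrix.of (fun i j =>
          Real.exp (-(pd i (mlext F) ψ)) *
            ((1 + Real.exp (-(pd i (mlext F) ψ))) ^ 2)⁻¹ *
            pd j (fun φ => pd i (mlext F) φ) ψ)) := by
  intro ψ hψ
  set c := sSup ((fun φ => |mlext F φ|) '' {φ : Fin n → ℝ | ∀ k, φ k ∈ Set.Icc (0:ℝ) 1})
  have hc : ∀ φ : Fin n → ℝ, (∀ k, φ k ∈ Set.Icc (0:ℝ) 1) → |mlext F φ| ≤ c := fun φ hφ =>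
    le_csSup ⟨_, Set.forall_mem_image.2 fun _ => abs_mlext_le F⟩ ⟨φ, hφ, rfl⟩
  have hnc : n * c < 1 := by
    rcases Nat.eq_zero_or_pos n with rfl | hn
    · simp
    · rw [lt_div_iff₀ (by positivity)] at hsup
      linarith
  have hentry : ∀ i j, |exp (-(pd i (mlext F) ψ)) * ((1 + exp (-(pd i (mlext F) ψ))) ^ 2)⁻¹ *
      pd j (fun φ => pd i (mlext F) φ) ψ| ≤ c := fun i j => by
    rw [abs_mul, abs_of_nonneg (by positivity)]
    calc _ ≤ 1 / 4 * (4 * c) := mul_le_mul (mul_inv_one_add_sq_le _)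
            (abs_pd_pd_mlext_le F hc hψ i j) (abs_nonneg _) (by norm_num)
      _ = c := by ring
  refine Matrix.isUnit_one_sub_of_forall_sum_norm_lt_one _ fun i => ?_
  calc ∑ j, ‖_‖ ≤ ∑ _j : Fin n, c := sum_le_sum fun j _ => hentry i j
    _ = n * c := by simp
    _ < 1 := hnc

theorem implicit_matrix_invertible {n : ℕ} (hn : 1 ≤ n) (F : Finset (Fin n) → ℝ)
    (hsup : sSup ((fun φ => |mlext F φ|) '' {φ : Fin n → ℝ | ∀ k, φ k ∈ Set.Icc (0:ℝ) 1})
      < 1 / n) :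
    ∀ ψ : Fin n → ℝ, (∀ k, ψ k ∈ Set.Icc (0:ℝ) 1) →
      IsUnit ((1 : Matrix (Fin n) (Fin n) ℝ) -
        Matrix.of (fun i j =>
          Real.exp (-(pd i (mlext F) ψ)) *
            ((1 + Real.exp (-(pd i (mlext F) ψ))) ^ 2)⁻¹ *
            pd j (fun φ => pd i (mlext F) φ) ψ)) :=
  implicit_matrix_invertible_general F hsup
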